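/- Let G be a graph with a maximal P3-packing S of fewer than k paths and A = V(G) \ V(S). If |A| > 9k, then at least one of the following holds: (i) Comp(G[A]) > 2|N(A)| − |N'_2(A)|, or (ii) Comp_2(G[A]) > |N_2(A)|, where Comp(G[A]) is the number of components of G[A], Comp_2(G[A]) the number of size-2 components, N_2(A) the set of vertices of N(A) adjacent to a size-2 component of G[A], and N'_2(A) ⊆ N_2(A) those adjacent to a size-2 component but to no size-1 component. -/

import Mathlib

open Finset

variable {V : Type*}

/-- vertex set of an (ordered) 3-path -/
def TripSet [DecidableEq V] (t : V × V × V) : Finset V := {t.1, t.2.1, t.2.2}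

/-- a P3-packing: a collection of vertex-disjoint paths on three vertices -/
def IsP3Packing [DecidableEq V] (G : SimpleGraph V) (P : Finset (V × V × V)) : Prop :=
  (∀ t ∈ P, G.Adj t.1 t.2.1 ∧ G.Adj t.2.1 t.2.2 ∧ t.1 ≠ t.2.2) ∧
  (∀ t ∈ P, ∀ s ∈ P, t ≠ s → Disjoint (TripSet t) (TripSet s))

/-- `D` is a 3-path vertex cover of the induced subgraph `G[S]` -/
def IsP3VCOn (G : SimpleGraph V) (S D : Finset V) : Prop :=
  ∀ a b c : V, a ∈ S → b ∈ S → c ∈ S → G.Adj a b → G.Adj b c → a ≠ c →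
    a ∈ D ∨ b ∈ D ∨ c ∈ D

def IsP3VC (G : SimpleGraph V) (C : Finset V) : Prop :=
  ∀ a b c : V, G.Adj a b → G.Adj b c → a ≠ c → a ∈ C ∨ b ∈ C ∨ c ∈ C

def NSet [Fintype V] [DecidableEq V] (G : SimpleGraph V) [DecidableRel G.Adj]
    (S : Finset V) : Finset V :=
  Finset.univ.filter (fun w => w ∉ S ∧ ∃ x ∈ S, G.Adj w x)

/-- a good decomposition `(I, C, R)` of `G` -/
def IsGoodDecomp [Fintype V] [DecidableEq V] (G : SimpleGraph V) [DecidableRel G.Adj]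
    (I C R : Finset V) : Prop :=
  (I ∪ C ∪ R = Finset.univ) ∧ Disjoint I C ∧ Disjoint I R ∧ Disjoint C R ∧
  (∀ a ∈ I, (I.filter (fun b => G.Adj a b)).card ≤ 1) ∧
  (∃ P : Finset (V × V × V), IsP3Packing G P ∧ (∀ t ∈ P, TripSet t ⊆ I ∪ C) ∧
    P.card = C.card) ∧
  (∀ a ∈ I, ∀ b ∈ R, ¬ G.Adj a b)

/-!
Maximality of `S` means that `G[A]` contains no path on three vertices, so every vertex of
`G[A]` has at most one neighbour in `A`, every component of `G[A]` has one or two vertices,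
and `|A| = Comp(G[A]) + Comp₂(G[A])`. If both alternatives failed, then `Comp(G[A]) ≤ 2|N(A)|`
and `Comp₂(G[A]) ≤ |N(A)|`, while `N(A) ⊆ V(S)` gives `|N(A)| ≤ 3|S|`; together
`|A| ≤ 9|S| < 9k`.
-/

namespace SimpleGraph

variable {W : Type*} {H : SimpleGraph W}

theorem nat_card_eq_sum_ncard_supp [Finite W] [Fintype H.ConnectedComponent] :
    Nat.card W = ∑ c : H.ConnectedComponent, c.supp.ncard := by
  rw [← Nat.card_congr (Equiv.sigmaFiberEquiv H.connectedComponentMk), Nat.card_sigma]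
  rfl

theorem Walk.eq_or_adj_of_adj_unique (hH : ∀ ⦃u v w⦄, H.Adj v u → H.Adj v w → u = w) :
    ∀ {x y : W}, H.Walk x y → x = y ∨ H.Adj x y
  | _, _, .nil => .inl rfl
  | _, _, .cons hxz p => by
    rcases p.eq_or_adj_of_adj_unique hH with rfl | hzy
    · exact .inr hxz
    · exact .inl (hH hxz.symm hzy)

theorem ConnectedComponent.ncard_supp_le_two [Finite W]
    (hH : ∀ ⦃u v w⦄, H.Adj v u → H.Adj v w → u = w) (c : H.ConnectedComponent) :
    c.supp.ncard ≤ 2 := by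
  obtain ⟨v, hv⟩ := c.nonempty_supp
  have hsub : c.supp ⊆ insert v (H.neighborSet v) := by
    intro x hx
    rw [mem_supp_iff, ← hv, ConnectedComponent.eq] at hx
    obtain ⟨p⟩ := hx
    rcases p.eq_or_adj_of_adj_unique hH with rfl | hxv
    · exact Set.mem_insert _ _
    · exact Set.mem_insert_of_mem _ hxv.symm
  have hnbr : (H.neighborSet v).ncard ≤ 1 :=
    (Set.ncard_le_one_iff (Set.toFinite _)).2 fun hx hy => hH hx hy
  calc c.supp.ncard ≤ (insert v (H.neighborSet v)).ncard := Set.ncard_le_ncard hsub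
    _ ≤ (H.neighborSet v).ncard + 1 := Set.ncard_insert_le _ _
    _ ≤ 2 := by omega

theorem nat_card_eq_card_connectedComponent_add [Finite W]
    (hH : ∀ ⦃u v w⦄, H.Adj v u → H.Adj v w → u = w) :
    Nat.card W = Nat.card H.ConnectedComponent +
      Nat.card {c : H.ConnectedComponent // c.supp.ncard = 2} := by
  classical
  have := Fintype.ofFinite H.ConnectedComponent
  have hsize (c : H.ConnectedComponent) :
      c.supp.ncard = 1 + if c.supp.ncard = 2 then 1 else 0 := by
    have := c.ncard_supp_le_two hH
    have := (Set.ncard_pos c.supp.toFinite).2 c.nonempty_supp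
    split_ifs <;> omega
  rw [nat_card_eq_sum_ncard_supp (H := H), Finset.sum_congr rfl fun c _ => hsize c,
    Finset.sum_add_distrib, ← Finset.card_filter, Nat.card_eq_fintype_card,
    Nat.card_eq_fintype_card, Fintype.card_subtype]
  simp

end SimpleGraph

section P3Packing

variable [DecidableEq V]

theorem card_biUnion_tripSet_le (P : Finset (V × V × V)) :
    (P.biUnion TripSet).card ≤ 3 * P.card :=
  calc (P.biUnion TripSet).card ≤ ∑ t ∈ P, (TripSet t).card := card_biUnion_le
    _ ≤ ∑ _t ∈ P, 3 := sum_le_sum fun _ _ => card_le_three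
    _ = 3 * P.card := by rw [sum_const, smul_eq_mul, mul_comm]

theorem IsP3Packing.insert {G : SimpleGraph V} {P : Finset (V × V × V)} (hP : IsP3Packing G P)
    {a b c : V} (hab : G.Adj a b) (hbc : G.Adj b c) (hac : a ≠ c)
    (hdisj : ∀ t ∈ P, Disjoint (TripSet (a, b, c)) (TripSet t)) :
    IsP3Packing G (insert (a, b, c) P) := by
  refine ⟨fun t ht => ?_, fun t ht s hs hts => ?_⟩
  · rcases mem_insert.1 ht with rfl | ht
    exacts [⟨hab, hbc, hac⟩, hP.1 t ht]
  · rcases mem_insert.1 ht with rfl | ht <;> rcases mem_insert.1 hs with rfl | hs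
    exacts [absurd rfl hts, hdisj s hs, (hdisj t ht).symm, hP.2 t ht s hs hts]

theorem IsP3Packing.eq_of_adj_of_adj_of_maximal {G : SimpleGraph V} {P : Finset (V × V × V)}
    (hP : IsP3Packing G P) (hmax : ∀ P', IsP3Packing G P' → P ⊆ P' → P' = P) {a b c : V}
    (ha : a ∉ P.biUnion TripSet) (hb : b ∉ P.biUnion TripSet) (hc : c ∉ P.biUnion TripSet)
    (hab : G.Adj a b) (hbc : G.Adj b c) : a = c := by
  by_contra hac
  have hdisj : Disjoint (TripSet (a, b, c)) (P.biUnion TripSet) := by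
    simp only [TripSet, disjoint_insert_left, disjoint_singleton_left]
    exact ⟨ha, hb, hc⟩
  have hins := hmax _ (hP.insert hab hbc hac ((disjoint_biUnion_right _ _ _).1 hdisj))
    (subset_insert _ _)
  exact ha (mem_biUnion.2 ⟨_, hins ▸ mem_insert_self _ _, by simp [TripSet]⟩)

end P3Packing

theorem NSet_univ_sdiff_subset [Fintype V] [DecidableEq V] (G : SimpleGraph V)
    [DecidableRel G.Adj] (B : Finset V) : NSet G (univ \ B) ⊆ B := by
  intro w hw
  simp only [NSet, mem_filter, mem_sdiff, mem_univ, true_and, not_not] at hw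
  exact hw.1

/-- for a maximal P3-packing `S` of fewer than `k` paths and
`A = V \ V(S)`, if `|A| > 9k` then `Comp(G[A]) > 2|N(A)| - |N'₂(A)|` or
`Comp₂(G[A]) > |N₂(A)|`. -/
theorem stmt12 [Fintype V] [DecidableEq V] (G : SimpleGraph V) [DecidableRel G.Adj]
    (k : ℕ) (S : Finset (V × V × V)) (hS : IsP3Packing G S)
    (hmax : ∀ S' : Finset (V × V × V), IsP3Packing G S' → S ⊆ S' → S' = S)
    (hk : S.card < k)
    (A : Finset V) (hA : A = Finset.univ \ S.biUnion TripSet)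
    (hbig : A.card > 9 * k) :
    (Nat.card ((G.induce (↑A : Set V)).ConnectedComponent) >
      2 * (NSet G A).card -
      ((NSet G A).filter (fun w =>
        (∃ a ∈ A, G.Adj w a ∧ ∃ b ∈ A, G.Adj a b) ∧
        ¬ ∃ a ∈ A, G.Adj w a ∧ ∀ b ∈ A, ¬ G.Adj a b)).card) ∨
    (Nat.card {c : (G.induce (↑A : Set V)).ConnectedComponent //
        c.supp.ncard = 2} >
      ((NSet G A).filter (fun w => ∃ a ∈ A, G.Adj w a ∧ ∃ b ∈ A, G.Adj a b)).card) := by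
  have hA_not_mem (x : V) (hx : x ∈ A) : x ∉ S.biUnion TripSet := by
    rw [hA] at hx
    exact (mem_sdiff.1 hx).2
  have hcomp := SimpleGraph.nat_card_eq_card_connectedComponent_add
    (H := G.induce (↑A : Set V)) fun u v w hvu hvw => Subtype.ext <|
      hS.eq_of_adj_of_adj_of_maximal hmax (hA_not_mem u u.2) (hA_not_mem v v.2) (hA_not_mem w w.2)
        hvu.symm hvw
  rw [Nat.card_coe_set_eq, Set.ncard_coe_finset] at hcomp
  have hN : (NSet G A).card ≤ 3 * S.card := by
    rw [hA]
    exact (card_le_card (NSet_univ_sdiff_subset G _)).trans (card_biUnion_tripSet_le S)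
  by_contra! hcon
  obtain ⟨hComp, hComp₂⟩ := hcon
  have := hComp.trans (Nat.sub_le _ _)
  have := hComp₂.trans (card_filter_le _ _)
  omega
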